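/- Let ρ be a density operator on a finite-dimensional Hilbert space, let ε ≥ 0, and let Π, Π_X, Π_Y, Π_{XY} be orthogonal projections each satisfying Tr{Πρ} ≥ 1 − ε, Tr{Π_X ρ} ≥ 1 − ε, Tr{Π_Y ρ} ≥ 1 − ε, and Tr{Π_{XY} ρ} ≥ 1 − ε. Then Tr{ Π Π_X Π_{XY} Π_X Π · Π_Y ρ Π_Y } ≥ 1 − ε − 6√ε. -/

import Mathlib

/-
Write `ρ = S Sᴴ`. For an orthogonal projection `Q`, `Tr(Qρ) = ‖QS‖²` in the Frobenius norm, so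
`Tr(Qρ) ≥ 1 - ε` together with `‖S‖ = 1` gives `‖(1 - Q)S‖ ≤ √ε`, the gentle-measurement step.
The target trace is `‖Π_XY Π_X Π Π_Y S‖²`. Since projections contract the Frobenius norm,
replacing `Π_X`, `Π`, `Π_Y` in turn by the identity costs at most `√ε` each, so
`‖Π_XY Π_X Π Π_Y S‖ ≥ ‖Π_XY S‖ - 3√ε` with `1 - ε ≤ ‖Π_XY S‖² ≤ 1`; squaring gives the bound.
-/

open scoped BigOperators ComplexOrder

noncomputable section

/-- Positive semidefinite square root, as defined in the older Mathlib
(`Matrix.PosSemidef.sqrt`, since removed). -/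
def Matrix.PosSemidef.sqrt {n 𝕜 : Type*} [Fintype n] [DecidableEq n] [RCLike 𝕜]
    {A : Matrix n n 𝕜} (hA : A.PosSemidef) : Matrix n n 𝕜 :=
  hA.1.eigenvectorUnitary.1 * Matrix.diagonal ((↑) ∘ Real.sqrt ∘ hA.1.eigenvalues) *
    (star hA.1.eigenvectorUnitary : Matrix n n 𝕜)

namespace QIC

/-- von Neumann entropy in bits, via eigenvalues (convention `0·log 0 = 0`). -/
def vnEntropy {m : Type*} [Fintype m] [DecidableEq m] (ρ : Matrix m m ℂ) : ℝ :=
  if h : ρ.IsHermitian then -∑ i, h.eigenvalues i * Real.logb 2 (h.eigenvalues i) else 0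

/-- min-entropy in bits: `−log₂` of the largest eigenvalue. -/
def minEntropy {m : Type*} [Fintype m] [DecidableEq m] (ρ : Matrix m m ℂ) : ℝ :=
  if h : ρ.IsHermitian then -Real.logb 2 (⨆ i, h.eigenvalues i) else 0

/-- A density operator: positive semidefinite with unit trace. -/
def IsDensity {m : Type*} [Fintype m] [DecidableEq m] (ρ : Matrix m m ℂ) : Prop :=
  ρ.PosSemidef ∧ ρ.trace = 1

/-- A POVM: a finite family of positive semidefinite operators summing to the identity. -/
def IsPOVM {ι m : Type*} [Fintype ι] [Fintype m] [DecidableEq m]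
    (Λ : ι → Matrix m m ℂ) : Prop :=
  (∀ i, (Λ i).PosSemidef) ∧ ∑ i, Λ i = 1

/-- A probability distribution on a finite alphabet. -/
def IsProbDist {X : Type*} [Fintype X] (p : X → ℝ) : Prop :=
  (∀ x, 0 ≤ p x) ∧ ∑ x, p x = 1

/-- `n`-fold tensor product of matrices on `Fin d`. -/
def tensorPow {d n : ℕ} (f : Fin n → Matrix (Fin d) (Fin d) ℂ) :
    Matrix (Fin n → Fin d) (Fin n → Fin d) ℂ :=
  Matrix.of fun i j => ∏ k, f k (i k) (j k)

/-- Positive semidefinite square root (zero on non-PSD matrices). -/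
def msqrt {m : Type*} [Fintype m] [DecidableEq m] (X : Matrix m m ℂ) : Matrix m m ℂ :=
  open Classical in if h : X.PosSemidef then h.sqrt else 0

/-- Trace norm `‖X‖₁ = Tr √(XᴴX)`. -/
def traceNorm {m : Type*} [Fintype m] [DecidableEq m] (X : Matrix m m ℂ) : ℝ :=
  (Matrix.posSemidef_conjTranspose_mul_self X).sqrt.trace.re

/-- Loewner order: `A ≤ B` iff `B − A` is positive semidefinite. -/
def loewnerLE {m : Type*} [Fintype m] [DecidableEq m] (A B : Matrix m m ℂ) : Prop :=
  (B - A).PosSemidef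

open Matrix

attribute [local instance] Matrix.frobeniusSeminormedAddCommGroup

section Frobenius

variable {𝕜 m n : Type*} [RCLike 𝕜] [Fintype m] [Fintype n]

theorem frobenius_norm_sq_eq_re_trace (A : Matrix m n 𝕜) :
    ‖A‖ ^ 2 = RCLike.re (Aᴴ * A).trace := by
  rw [frobenius_norm_def, ← Real.sqrt_eq_rpow, Real.sq_sqrt (by positivity)]
  simp only [Real.rpow_two, trace, diag_apply, mul_apply, conjTranspose_apply, map_sum,
    RCLike.star_def, RCLike.conj_mul, ← RCLike.ofReal_pow, RCLike.ofReal_re]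
  exact Finset.sum_comm

theorem re_trace_mul_conjTranspose (A : Matrix m n 𝕜) :
    RCLike.re (A * Aᴴ).trace = ‖A‖ ^ 2 := by
  rw [frobenius_norm_sq_eq_re_trace, trace_mul_comm]

theorem _root_.Matrix.PosSemidef.exists_eq_mul_conjTranspose {A : Matrix m m 𝕜}
    (hA : A.PosSemidef) : ∃ S : Matrix m m 𝕜, A = S * Sᴴ := by
  classical
  open MatrixOrder in
  obtain ⟨S, hS, -, rfl⟩ := CFC.exists_sqrt_of_isSelfAdjoint_of_quasispectrumRestricts
    hA.isHermitian (QuasispectrumRestricts.nnreal_of_nonneg hA.nonneg)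
  exact ⟨S, by rw [← star_eq_conjTranspose, hS.star_eq]⟩

theorem re_trace_conjTranspose_mul_mul_mul {E : Matrix m m 𝕜} (hE : IsStarProjection E)
    (C R : Matrix m m 𝕜) (S : Matrix m n 𝕜) :
    RCLike.re ((Cᴴ * E * C) * (R * (S * Sᴴ) * Rᴴ)).trace = ‖E * C * R * S‖ ^ 2 := by
  rw [← re_trace_mul_conjTranspose]
  congr 1
  have hEE : Eᴴ * E = E := by
    rw [← star_eq_conjTranspose, hE.isSelfAdjoint.star_eq, hE.isIdempotentElem.eq]
  set M := R * (S * Sᴴ) * Rᴴ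
  calc ((Cᴴ * E * C) * M).trace
      = ((C * M) * (Cᴴ * E)).trace := by rw [trace_mul_comm (C * M)]; simp only [Matrix.mul_assoc]
    _ = ((C * M * Cᴴ) * (Eᴴ * E)).trace := by rw [hEE]; simp only [Matrix.mul_assoc]
    _ = (E * (C * M * Cᴴ) * Eᴴ).trace := by
        rw [trace_mul_comm (C * M * Cᴴ), trace_mul_comm (E * _) Eᴴ]; simp only [Matrix.mul_assoc]
    _ = _ := by simp only [M, conjTranspose_mul, Matrix.mul_assoc]

variable [DecidableEq m] {Q : Matrix m m 𝕜}

theorem _root_.IsStarProjection.frobenius_norm_mul_sq_add_one_sub_mul_sq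
    (hQ : IsStarProjection Q) (A : Matrix m n 𝕜) :
    ‖Q * A‖ ^ 2 + ‖(1 - Q) * A‖ ^ 2 = ‖A‖ ^ 2 := by
  have hsum : Qᴴ * Q + (1 - Q)ᴴ * (1 - Q) = 1 := by
    simp only [← star_eq_conjTranspose, hQ.isSelfAdjoint.star_eq, hQ.one_sub.isSelfAdjoint.star_eq,
      hQ.isIdempotentElem.eq, hQ.one_sub.isIdempotentElem.eq]
    abel
  simp only [frobenius_norm_sq_eq_re_trace, ← map_add, ← trace_add]
  congr 2
  calc (Q * A)ᴴ * (Q * A) + ((1 - Q) * A)ᴴ * ((1 - Q) * A)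
      = Aᴴ * (Qᴴ * Q + (1 - Q)ᴴ * (1 - Q)) * A := by
        simp only [conjTranspose_mul, Matrix.mul_add, Matrix.add_mul, Matrix.mul_assoc]
    _ = Aᴴ * A := by rw [hsum, Matrix.mul_one]

theorem _root_.IsStarProjection.frobenius_norm_mul_le (hQ : IsStarProjection Q)
    (A : Matrix m n 𝕜) : ‖Q * A‖ ≤ ‖A‖ := by
  have := hQ.frobenius_norm_mul_sq_add_one_sub_mul_sq A
  nlinarith [norm_nonneg (Q * A), norm_nonneg A, sq_nonneg ‖(1 - Q) * A‖]

theorem _root_.IsStarProjection.re_trace_mul_mul_conjTranspose (hQ : IsStarProjection Q)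
    (S : Matrix m n 𝕜) : RCLike.re (Q * (S * Sᴴ)).trace = ‖Q * S‖ ^ 2 := by
  simpa using re_trace_conjTranspose_mul_mul_mul hQ 1 1 S

theorem _root_.IsStarProjection.frobenius_norm_one_sub_mul_le_sqrt (hQ : IsStarProjection Q)
    {S : Matrix m n 𝕜} (hS : ‖S‖ = 1) {ε : ℝ} (h : 1 - ε ≤ RCLike.re (Q * (S * Sᴴ)).trace) :
    ‖(1 - Q) * S‖ ≤ √ε := by
  have := hQ.frobenius_norm_mul_sq_add_one_sub_mul_sq S
  rw [hQ.re_trace_mul_mul_conjTranspose] at h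
  simpa using Real.abs_le_sqrt (by nlinarith : ‖(1 - Q) * S‖ ^ 2 ≤ ε)

theorem frobenius_norm_mul_le_add {T : Matrix m m 𝕜} (hT : ∀ B : Matrix m n 𝕜, ‖T * B‖ ≤ ‖B‖)
    (Q : Matrix m m 𝕜) (A : Matrix m n 𝕜) : ‖T * A‖ ≤ ‖T * Q * A‖ + ‖(1 - Q) * A‖ :=
  calc ‖T * A‖ = ‖T * Q * A + T * ((1 - Q) * A)‖ := by
        rw [Matrix.mul_assoc, ← Matrix.mul_add, ← Matrix.add_mul, add_sub_cancel, Matrix.one_mul]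
    _ ≤ ‖T * Q * A‖ + ‖(1 - Q) * A‖ := norm_add_le_of_le le_rfl (hT _)

theorem _root_.IsStarProjection.frobenius_norm_mul_mul_le {T : Matrix m m 𝕜}
    (hT : ∀ B : Matrix m n 𝕜, ‖T * B‖ ≤ ‖B‖) (hQ : IsStarProjection Q) (B : Matrix m n 𝕜) :
    ‖T * Q * B‖ ≤ ‖B‖ :=
  (Matrix.mul_assoc T Q B ▸ hT (Q * B)).trans (hQ.frobenius_norm_mul_le B)

end Frobenius

theorem one_sub_sq_sub_le_sq {s t N : ℝ} (hs : 0 ≤ s) (hs1 : s ≤ 1) (ht : 0 ≤ t)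
    (hst : 1 - t ^ 2 ≤ s ^ 2) (hN : s ≤ N + 3 * t) : 1 - t ^ 2 - 6 * t ≤ N ^ 2 := by
  rcases le_or_gt (3 * t) s with h | h
  · nlinarith
  · nlinarith

/-- **Key intermediate estimate in the two-sender simultaneous decoder error analysis.**
If `Π`, `Π_X`, `Π_Y`, `Π_{XY}` are orthogonal projections each succeeding with probability
at least `1 − ε` on a density operator `ρ`, then
`Tr{ Π Π_X Π_{XY} Π_X Π ⬝ Π_Y ρ Π_Y } ≥ 1 − ε − 6√ε`. -/
theorem projector_sandwich_estimate
    {m : Type*} [Fintype m] [DecidableEq m]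
    (ρ : Matrix m m ℂ) (hρ : IsDensity ρ)
    (ε : ℝ) (hε : 0 ≤ ε)
    (P PX PY PXY : Matrix m m ℂ)
    (hP : P.IsHermitian) (hPproj : P * P = P)
    (hPX : PX.IsHermitian) (hPXproj : PX * PX = PX)
    (hPY : PY.IsHermitian) (hPYproj : PY * PY = PY)
    (hPXY : PXY.IsHermitian) (hPXYproj : PXY * PXY = PXY)
    (h1 : 1 - ε ≤ ((P * ρ).trace).re)
    (h2 : 1 - ε ≤ ((PX * ρ).trace).re)
    (h3 : 1 - ε ≤ ((PY * ρ).trace).re)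
    (h4 : 1 - ε ≤ ((PXY * ρ).trace).re) :
    1 - ε - 6 * Real.sqrt ε ≤
      (((P * PX * PXY * PX * P) * (PY * ρ * PY)).trace).re := by
  have isStarProjection {Q : Matrix m m ℂ} (hH : Q.IsHermitian) (hQ : Q * Q = Q) : IsStarProjection Q :=
    ⟨hQ, hH.isSelfAdjoint⟩
  obtain ⟨S, rfl⟩ := hρ.1.exists_eq_mul_conjTranspose
  have hS : ‖S‖ = 1 := by
    have := re_trace_mul_conjTranspose S
    rw [hρ.2, RCLike.one_re] at this
    exact (pow_eq_one_iff_of_nonneg (norm_nonneg S) two_ne_zero).mp this.symm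
  have hXY := isStarProjection hPXY hPXYproj
  have hchain : ‖PXY * S‖ ≤ ‖PXY * PX * P * PY * S‖ + 3 * √ε := by
    have hT₁ : ∀ B : Matrix m m ℂ, ‖PXY * B‖ ≤ ‖B‖ := hXY.frobenius_norm_mul_le
    have hT₂ := (isStarProjection hPX hPXproj).frobenius_norm_mul_mul_le hT₁
    have hT₃ := (isStarProjection hP hPproj).frobenius_norm_mul_mul_le hT₂
    have gX := (isStarProjection hPX hPXproj).frobenius_norm_one_sub_mul_le_sqrt hS h2
    have gP := (isStarProjection hP hPproj).frobenius_norm_one_sub_mul_le_sqrt hS h1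
    have gY := (isStarProjection hPY hPYproj).frobenius_norm_one_sub_mul_le_sqrt hS h3
    have := frobenius_norm_mul_le_add hT₁ PX S
    have := frobenius_norm_mul_le_add hT₂ P S
    have := frobenius_norm_mul_le_add hT₃ PY S
    linarith
  have hsandwich : ((P * PX * PXY * PX * P) * (PY * (S * Sᴴ) * PY)).trace.re =
      ‖PXY * PX * P * PY * S‖ ^ 2 := by
    simpa only [RCLike.re_to_complex, conjTranspose_mul, hP.eq, hPX.eq, hPY.eq,
      Matrix.mul_assoc] using re_trace_conjTranspose_mul_mul_mul hXY (PX * P) PY S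
  rw [hsandwich]
  have hPXYS : 1 - √ε ^ 2 ≤ ‖PXY * S‖ ^ 2 := by
    rwa [Real.sq_sqrt hε, ← hXY.re_trace_mul_mul_conjTranspose]
  simpa only [Real.sq_sqrt hε] using one_sub_sq_sub_le_sq (norm_nonneg _)
    ((hXY.frobenius_norm_mul_le S).trans hS.le) (Real.sqrt_nonneg ε) hPXYS hchain

end QIC
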